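/- The quotient of the space of nonempty compact subsets of ℝⁿ by isometric equivalence, equipped with the induced distance h̃, is a complete metric space. -/

import Mathlib

/-!
The infimum defining `shapeDiff A B` may be taken over isometries moving `B` alone, which gives
the pseudometric axioms. If `shapeDiff A B = 0`, isometries `φₖ` with `h(A, φₖ B) → 0` keep a
point of `B` in a bounded region; since isometries of `ℝⁿ` are affine (Mazur–Ulam) with linear
parts in the compact orthogonal group, a subsequence converges uniformly on bounded sets to an
isometry `Φ`, and `Φ B = A`. For completeness, a rapidly Cauchy sequence of classes is lifted, by
composing almost optimal isometries between consecutive terms, to a Cauchy sequence in the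
complete space of nonempty compact sets; its Hausdorff limit represents the limit class.
-/

abbrev E (n : ℕ) := EuclideanSpace ℝ (Fin n)

/-- The nonempty compact subsets of `ℝⁿ`. -/
def CompactNE (n : ℕ) : Type :=
  {A : Set (E n) // IsCompact A ∧ A.Nonempty}

/-- Isometric equivalence of subsets of `ℝⁿ`. -/
def isomEquiv {n : ℕ} (A B : Set (E n)) : Prop :=
  ∃ φ : E n ≃ᵢ E n, B = φ '' A

/-- The modified Hausdorff distance (shape difference). -/
noncomputable def shapeDiff {n : ℕ} (A B : Set (E n)) : ℝ :=
  sInf {r : ℝ | ∃ A₁ B₁ : Set (E n), isomEquiv A A₁ ∧ isomEquiv B B₁ ∧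
    r = Metric.hausdorffDist A₁ B₁}

def isomSetoid (n : ℕ) : Setoid (CompactNE n) :=
  ⟨fun A B => isomEquiv A.1 B.1, by
    constructor
    · intro A; exact ⟨IsometryEquiv.refl _, by ext x; exact ⟨fun hx => ⟨x, hx, rfl⟩, fun ⟨y, hy, e⟩ => e ▸ hy⟩⟩
    · rintro A B ⟨φ, h⟩
      exact ⟨φ.symm, by simp [h, Set.image_image]⟩
    · rintro A B C ⟨φ, h⟩ ⟨ψ, h'⟩
      exact ⟨φ.trans ψ, by simp [h', h, Set.image_image]; rfl⟩⟩

open Metric Set Filter Topology TopologicalSpace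

section UniformLimits

variable {ι α X : Type*} [PseudoMetricSpace X] {p : Filter ι} {F : ι → α → X} {f : α → X}
  {s : Set α}

theorem tendstoUniformlyOn_of_dist_le {b : ι → ℝ} (hb : Tendsto b p (𝓝 0))
    (h : ∀ i, ∀ x ∈ s, dist (f x) (F i x) ≤ b i) : TendstoUniformlyOn F f p s :=
  Metric.tendstoUniformlyOn_iff.2 fun _ hε =>
    (hb.eventually (gt_mem_nhds hε)).mono fun i hi x hx => (h i x hx).trans_lt hi

theorem TendstoUniformlyOn.tendsto_hausdorffDist_image (h : TendstoUniformlyOn F f p s) :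
    Tendsto (fun i => hausdorffDist (F i '' s) (f '' s)) p (𝓝 0) := by
  refine Metric.tendsto_nhds.2 fun ε hε => ?_
  filter_upwards [Metric.tendstoUniformlyOn_iff.1 h (ε / 2) (half_pos hε)] with i hi
  rw [Real.dist_0_eq_abs, abs_of_nonneg hausdorffDist_nonneg]
  refine (hausdorffDist_le_of_mem_dist (half_pos hε).le ?_ ?_).trans_lt (half_lt_self hε)
  · rintro _ ⟨x, hx, rfl⟩
    exact ⟨f x, mem_image_of_mem f hx, by rw [dist_comm]; exact (hi x hx).le⟩
  · rintro _ ⟨x, hx, rfl⟩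
    exact ⟨F i x, mem_image_of_mem _ hx, (hi x hx).le⟩

end UniformLimits

section IsometriesOfFiniteDimensionalSpaces

variable {V : Type*} [NormedAddCommGroup V] [NormedSpace ℝ V] [FiniteDimensional ℝ V]

theorem isCompact_setOf_forall_norm_apply_eq :
    IsCompact {f : V →L[ℝ] V | ∀ x, ‖f x‖ = ‖x‖} := by
  refine (isCompact_closedBall (0 : V →L[ℝ] V) 1).of_isClosed_subset ?_ fun f hf => ?_
  · simp only [ofPred_forall]
    exact isClosed_iInter fun x => isClosed_eq (continuous_eval_const x).norm continuous_const
  · rw [mem_closedBall_zero_iff]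
    exact f.opNorm_le_bound zero_le_one fun x => by rw [hf x, one_mul]

theorem IsometryEquiv.exists_subseq_tendstoUniformlyOn (φ : ℕ → V ≃ᵢ V) (x₀ : V)
    (hφ : Bornology.IsBounded (range fun k => φ k x₀)) :
    ∃ Φ : V ≃ᵢ V, ∃ ι : ℕ → ℕ, StrictMono ι ∧
      ∀ s : Set V, Bornology.IsBounded s → TendstoUniformlyOn (fun k => φ (ι k)) Φ atTop s := by
  set L : ℕ → V →L[ℝ] V := fun k => ((φ k).toRealLinearIsometryEquiv : V →L[ℝ] V)
  have hφ₀ : Bornology.IsBounded (range fun k => φ k 0) := by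
    refine (hφ.cthickening (δ := ‖x₀‖)).subset ?_
    rintro _ ⟨k, rfl⟩
    refine mem_cthickening_of_dist_le _ (φ k x₀) _ _ (mem_range_self k) ?_
    rw [(φ k).dist_eq, dist_zero_left]
  obtain ⟨⟨T, d⟩, ⟨hT, -⟩, ι, hι, hlim⟩ :=
    ((isCompact_setOf_forall_norm_apply_eq (V := V)).prod hφ₀.isCompact_closure).tendsto_subseq
      (x := fun k => (L k, φ k 0))
      fun k => ⟨fun x => (φ k).toRealLinearIsometryEquiv.norm_map x,
        subset_closure (mem_range_self k)⟩
  let Φ : V ≃ᵢ V :=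
    (LinearIsometry.toLinearIsometryEquiv ⟨(T : V →ₗ[ℝ] V), hT⟩ rfl).toIsometryEquiv.trans
      (IsometryEquiv.addRight d)
  refine ⟨Φ, ι, hι, fun s hs => ?_⟩
  obtain ⟨R, hR⟩ := hs.subset_closedBall 0
  have hdecomp : ∀ k x, φ (ι k) x - Φ x = (L (ι k) - T) x + (φ (ι k) 0 - d) := by
    intro k x
    simp only [Φ, L, IsometryEquiv.trans_apply, IsometryEquiv.addRight_apply,
      LinearIsometryEquiv.coe_toIsometryEquiv, LinearIsometry.toLinearIsometryEquiv_apply,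
      LinearIsometry.coe_mk, ContinuousLinearMap.coe_coe, sub_apply,
      ContinuousLinearEquiv.coe_coe, LinearIsometryEquiv.coe_toContinuousLinearEquiv,
      IsometryEquiv.toRealLinearIsometryEquiv_apply]
    abel
  have hbound : ∀ k, ∀ x ∈ s, dist (φ (ι k) x) (Φ x) ≤ ‖L (ι k) - T‖ * R + ‖φ (ι k) 0 - d‖ := by
    intro k x hx
    rw [dist_eq_norm, hdecomp]
    calc ‖(L (ι k) - T) x + (φ (ι k) 0 - d)‖ ≤ ‖L (ι k) - T‖ * ‖x‖ + ‖φ (ι k) 0 - d‖ :=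
          norm_add_le_of_le ((L (ι k) - T).le_opNorm x) le_rfl
      _ ≤ ‖L (ι k) - T‖ * R + ‖φ (ι k) 0 - d‖ := by
          gcongr
          simpa using hR hx
  have hL : Tendsto (fun k => L (ι k)) atTop (𝓝 T) := (continuous_fst.tendsto _).comp hlim
  have hd : Tendsto (fun k => φ (ι k) 0) atTop (𝓝 d) := (continuous_snd.tendsto _).comp hlim
  refine tendstoUniformlyOn_of_dist_le ?_ fun k x hx => dist_comm (Φ x) _ ▸ hbound k x hx
  simpa using ((tendsto_iff_norm_sub_tendsto_zero.1 hL).mul_const R).add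
    (tendsto_iff_norm_sub_tendsto_zero.1 hd)

end IsometriesOfFiniteDimensionalSpaces

section ShapeDiff

variable {n : ℕ} {A B C : Set (E n)}

theorem isomEquiv_refl (A : Set (E n)) : isomEquiv A A :=
  ⟨IsometryEquiv.refl _, (image_id A).symm⟩

theorem isomEquiv_image (φ : E n ≃ᵢ E n) (A : Set (E n)) : isomEquiv A (φ '' A) :=
  ⟨φ, rfl⟩

theorem isomEquiv.symm (h : isomEquiv A B) : isomEquiv B A := by
  obtain ⟨φ, rfl⟩ := h
  exact ⟨φ.symm, by simp [image_image]⟩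

theorem isomEquiv.trans (h : isomEquiv A B) (h' : isomEquiv B C) : isomEquiv A C := by
  obtain ⟨φ, rfl⟩ := h
  obtain ⟨ψ, rfl⟩ := h'
  exact ⟨φ.trans ψ, by rw [image_image]; rfl⟩

theorem shapeDiff_eq_iInf (A B : Set (E n)) :
    shapeDiff A B = ⨅ φ : E n ≃ᵢ E n, hausdorffDist A (φ '' B) := by
  refine congrArg sInf (Subset.antisymm ?_ ?_)
  · rintro _ ⟨_, _, ⟨μ, rfl⟩, ⟨ν, rfl⟩, rfl⟩
    refine ⟨ν.trans μ.symm, ?_⟩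
    calc hausdorffDist A ((ν.trans μ.symm) '' B)
        = hausdorffDist (μ '' A) (μ '' ((ν.trans μ.symm) '' B)) :=
          (hausdorffDist_image μ.isometry).symm
      _ = hausdorffDist (μ '' A) (ν '' B) := by simp [image_image]
  · rintro _ ⟨φ, rfl⟩
    exact ⟨A, φ '' B, isomEquiv_refl A, isomEquiv_image φ B, rfl⟩

theorem bddBelow_range_hausdorffDist_image :
    BddBelow (range fun φ : E n ≃ᵢ E n => hausdorffDist A (φ '' B)) :=
  ⟨0, by rintro _ ⟨φ, rfl⟩; exact hausdorffDist_nonneg⟩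

theorem shapeDiff_nonneg : 0 ≤ shapeDiff A B := by
  rw [shapeDiff_eq_iInf]
  exact Real.iInf_nonneg fun _ => hausdorffDist_nonneg

theorem shapeDiff_le_hausdorffDist_image (φ : E n ≃ᵢ E n) :
    shapeDiff A B ≤ hausdorffDist A (φ '' B) := by
  rw [shapeDiff_eq_iInf]
  exact ciInf_le bddBelow_range_hausdorffDist_image φ

theorem shapeDiff_le_hausdorffDist_image_left (φ : E n ≃ᵢ E n) :
    shapeDiff A B ≤ hausdorffDist (φ '' A) B := by
  have h : hausdorffDist (φ '' A) B = hausdorffDist A (φ.symm '' B) := by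
    simpa [image_image] using hausdorffDist_image (s := A) (t := φ.symm '' B) φ.isometry
  exact h ▸ shapeDiff_le_hausdorffDist_image φ.symm

theorem exists_hausdorffDist_image_lt {r : ℝ} (h : shapeDiff A B < r) :
    ∃ φ : E n ≃ᵢ E n, hausdorffDist A (φ '' B) < r := by
  rw [shapeDiff_eq_iInf] at h
  exact exists_lt_of_ciInf_lt h

theorem shapeDiff_self (A : Set (E n)) : shapeDiff A A = 0 := by
  refine le_antisymm ?_ shapeDiff_nonneg
  calc shapeDiff A A ≤ hausdorffDist A (IsometryEquiv.refl (E n) '' A) :=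
        shapeDiff_le_hausdorffDist_image _
    _ = 0 := by
      rw [show IsometryEquiv.refl (E n) '' A = A from image_id A, hausdorffDist_self_zero]

theorem shapeDiff_comm (A B : Set (E n)) : shapeDiff A B = shapeDiff B A := by
  unfold shapeDiff
  congr 1
  ext r
  constructor <;>
  · rintro ⟨A₁, B₁, hA, hB, rfl⟩
    exact ⟨B₁, A₁, hB, hA, hausdorffDist_comm⟩

theorem shapeDiff_congr {A' B' : Set (E n)} (hA : isomEquiv A A') (hB : isomEquiv B B') :
    shapeDiff A B = shapeDiff A' B' := by
  unfold shapeDiff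
  congr 1
  ext r
  constructor
  · rintro ⟨A₁, B₁, hA₁, hB₁, rfl⟩
    exact ⟨A₁, B₁, hA.symm.trans hA₁, hB.symm.trans hB₁, rfl⟩
  · rintro ⟨A₁, B₁, hA₁, hB₁, rfl⟩
    exact ⟨A₁, B₁, hA.trans hA₁, hB.trans hB₁, rfl⟩

theorem shapeDiff_triangle (hA : Bornology.IsBounded A) (hA₀ : A.Nonempty)
    (hB : Bornology.IsBounded B) (hB₀ : B.Nonempty) :
    shapeDiff A C ≤ shapeDiff A B + shapeDiff B C := by
  refine le_of_forall_pos_lt_add fun ε hε => ?_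
  obtain ⟨φ, hφ⟩ :=
    exists_hausdorffDist_image_lt (lt_add_of_pos_right (shapeDiff A B) (half_pos hε))
  obtain ⟨ψ, hψ⟩ :=
    exists_hausdorffDist_image_lt (lt_add_of_pos_right (shapeDiff B C) (half_pos hε))
  have hfin : hausdorffEDist A (φ '' B) ≠ ⊤ :=
    hausdorffEDist_ne_top_of_nonempty_of_bounded hA₀ (hB₀.image φ) hA
      (φ.isometry.lipschitz.isBounded_image hB)
  calc shapeDiff A C ≤ hausdorffDist A (φ '' (ψ '' C)) := by
        rw [image_image]
        exact shapeDiff_le_hausdorffDist_image (ψ.trans φ)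
    _ ≤ hausdorffDist A (φ '' B) + hausdorffDist (φ '' B) (φ '' (ψ '' C)) :=
        hausdorffDist_triangle hfin
    _ = hausdorffDist A (φ '' B) + hausdorffDist B (ψ '' C) := by
        rw [hausdorffDist_image φ.isometry]
    _ < shapeDiff A B + shapeDiff B C + ε := by linarith

end ShapeDiff

section Rigidity

variable {n : ℕ} {A B : Set (E n)}

theorem isomEquiv_of_shapeDiff_eq_zero (hA : IsCompact A) (hA₀ : A.Nonempty)
    (hB : IsCompact B) (hB₀ : B.Nonempty) (h : shapeDiff A B = 0) : isomEquiv B A := by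
  have hfin : ∀ φ : E n ≃ᵢ E n, hausdorffEDist A (φ '' B) ≠ ⊤ := fun φ =>
    hausdorffEDist_ne_top_of_nonempty_of_bounded hA₀ (hB₀.image φ) hA.isBounded
      (hB.image φ.continuous).isBounded
  choose φ hφ using fun k : ℕ =>
    exists_hausdorffDist_image_lt (A := A) (B := B) (h.symm ▸ Nat.one_div_pos_of_nat (n := k))
  obtain ⟨b, hb⟩ := hB₀
  have hbdd : Bornology.IsBounded (range fun k => φ k b) := by
    refine (hA.isBounded.thickening (δ := 1)).subset ?_
    rintro _ ⟨k, rfl⟩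
    have hlt : hausdorffDist A (φ k '' B) < 1 :=
      (hφ k).trans_le (div_le_one_of_le₀ (by linarith [k.cast_nonneg' (α := ℝ)]) (by positivity))
    obtain ⟨a, ha, hdist⟩ :=
      exists_dist_lt_of_hausdorffDist_lt' (mem_image_of_mem _ hb) hlt (hfin _)
    exact mem_thickening_iff.2 ⟨a, ha, dist_comm a _ ▸ hdist⟩
  obtain ⟨Φ, ι, hι, hΦ⟩ := IsometryEquiv.exists_subseq_tendstoUniformlyOn φ b hbdd
  have hφι : Tendsto (fun k => hausdorffDist A (φ (ι k) '' B)) atTop (𝓝 0) :=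
    squeeze_zero (fun _ => hausdorffDist_nonneg) (fun k => (hφ (ι k)).le)
      (tendsto_one_div_add_atTop_nhds_zero_nat.comp hι.tendsto_atTop)
  have hlim : Tendsto (fun k => hausdorffDist A (φ (ι k) '' B) +
      hausdorffDist (φ (ι k) '' B) (Φ '' B)) atTop (𝓝 0) := by
    simpa using hφι.add (hΦ B hB.isBounded).tendsto_hausdorffDist_image
  have hzero : hausdorffDist A (Φ '' B) = 0 :=
    le_antisymm (ge_of_tendsto' hlim fun k => hausdorffDist_triangle (hfin (φ (ι k))))
      hausdorffDist_nonneg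
  exact ⟨Φ, (hA.isClosed.hausdorffDist_zero_iff_eq (hB.image Φ.continuous).isClosed
    (hfin Φ)).1 hzero⟩

end Rigidity

theorem exists_isometryEquiv_chain {n : ℕ} (A : ℕ → Set (E n)) (ε : ℕ → ℝ)
    (h : ∀ k, shapeDiff (A k) (A (k + 1)) < ε k) :
    ∃ Ψ : ℕ → E n ≃ᵢ E n, ∀ k, hausdorffDist (Ψ k '' A k) (Ψ (k + 1) '' A (k + 1)) < ε k := by
  choose φ hφ using fun k => exists_hausdorffDist_image_lt (h k)
  let Ψ : ℕ → E n ≃ᵢ E n := fun k => Nat.rec (.refl _) (fun k Ψk => (φ k).trans Ψk) k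
  refine ⟨Ψ, fun k => ?_⟩
  have hstep : Ψ (k + 1) '' A (k + 1) = Ψ k '' (φ k '' A (k + 1)) := by
    rw [image_image]; rfl
  rw [hstep, hausdorffDist_image (Ψ k).isometry]
  exact hφ k

section QuotientMetric

variable {n : ℕ}

noncomputable instance shapeMetricSpace : MetricSpace (Quotient (isomSetoid n)) where
  dist := Quotient.lift₂ (fun A B : CompactNE n => shapeDiff A.1 B.1)
    fun _ _ _ _ hA hB => shapeDiff_congr hA hB
  dist_self := Quotient.ind fun A => shapeDiff_self A.1
  dist_comm := Quotient.ind₂ fun A B => shapeDiff_comm A.1 B.1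
  dist_triangle := Quotient.ind fun A => Quotient.ind₂ fun B C =>
    shapeDiff_triangle A.2.1.isBounded A.2.2 B.2.1.isBounded B.2.2
  eq_of_dist_eq_zero {p q} := Quotient.inductionOn₂ p q fun A B h => Quotient.sound <|
    isomEquiv_of_shapeDiff_eq_zero B.2.1 B.2.2 A.2.1 A.2.2 ((shapeDiff_comm _ _).trans h)

theorem shapeMetricSpace_dist_mk (A B : CompactNE n) :
    dist (Quotient.mk (isomSetoid n) A) (Quotient.mk (isomSetoid n) B) = shapeDiff A.1 B.1 :=
  rfl

theorem completeSpace_shapeMetricSpace : CompleteSpace (Quotient (isomSetoid n)) := by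
  refine Metric.complete_of_convergent_controlled_sequences (fun k => (1 / 2 : ℝ) ^ k)
    (fun k => by positivity) fun u hu => ?_
  set A : ℕ → CompactNE n := fun k => (u k).out
  have hA : ∀ k, Quotient.mk (isomSetoid n) (A k) = u k := fun k => Quotient.out_eq _
  obtain ⟨Ψ, hΨ⟩ := exists_isometryEquiv_chain (fun k => (A k).1) _ fun k => by
    simpa only [← hA, shapeMetricSpace_dist_mk] using hu k k (k + 1) le_rfl k.le_succ
  let K : ℕ → NonemptyCompacts (E n) := fun k =>
    ⟨⟨Ψ k '' (A k).1, (A k).2.1.image (Ψ k).continuous⟩, (A k).2.2.image _⟩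
  have hK : CauchySeq K := cauchySeq_of_le_geometric (1 / 2) 1 (by norm_num) fun k => by
    rw [NonemptyCompacts.dist_eq, one_mul]
    exact (hΨ k).le
  obtain ⟨L, hL⟩ := cauchySeq_tendsto_of_complete hK
  refine ⟨Quotient.mk _ ⟨L, L.isCompact, L.nonempty⟩, tendsto_iff_dist_tendsto_zero.2 <|
    squeeze_zero (fun _ => dist_nonneg) (fun k => ?_) (tendsto_iff_dist_tendsto_zero.1 hL)⟩
  rw [← hA k, NonemptyCompacts.dist_eq]
  exact shapeDiff_le_hausdorffDist_image_left (Ψ k)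

end QuotientMetric

/-- The quotient of the space of nonempty compact subsets of `ℝⁿ` by isometric
equivalence, with distance induced by the shape difference `shapeDiff`,
is a complete metric space. -/
theorem shapeDiff_quotient_complete_metric (n : ℕ) :
    ∃ m : MetricSpace (Quotient (isomSetoid n)),
      (∀ A B : CompactNE n,
        m.toDist.dist (Quotient.mk (isomSetoid n) A) (Quotient.mk (isomSetoid n) B)
          = shapeDiff A.1 B.1) ∧
      @CompleteSpace (Quotient (isomSetoid n)) m.toUniformSpace :=
  ⟨shapeMetricSpace, shapeMetricSpace_dist_mk, completeSpace_shapeMetricSpace⟩
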